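/- The conditional non-1-fragility probabilities given that Player 1 wins satisfy α_0(1) = 0 and, for every n ≥ 1, α_{2n}(1) = φ³ + 2φ²·α_{2n−1}(1) and α_{2n−1}(1) = (α_{2n−2}(1))². -/

import Mathlib

open Filter Topology

/-- The golden ratio `φ = (√5 − 1)/2`. -/
noncomputable def phi : ℝ := (Real.sqrt 5 - 1) / 2

/-- Backward-induction value of the win-lose game of depth `n` on the complete binary tree:
`V_0(a) = a 0`; for `n ≥ 1`, the value is the `AND` of the values of the two depth-`(n−1)`
subtrees if `n` is odd (Player 2, the minimizer, moves) and the `OR` if `n` is even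
(Player 1, the maximizer, moves).  Player 2 moves last. -/
def gameValue : (n : ℕ) → (Fin (2 ^ n) → Bool) → Bool
  | 0, a => a 0
  | n + 1, a =>
      have h : 2 ^ (n + 1) = 2 ^ n + 2 ^ n := by rw [pow_succ]; omega
      let aL : Fin (2 ^ n) → Bool := fun i => a ⟨i.1, by have := i.2; omega⟩
      let aR : Fin (2 ^ n) → Bool := fun i => a ⟨i.1 + 2 ^ n, by have := i.2; omega⟩
      if (n + 1) % 2 = 1 then gameValue n aL && gameValue n aR
      else gameValue n aL || gameValue n aR

/-- `μ_{n,p}(S)`: the probability of a set `S` of depth-`n` games when the `2^n` payoffs are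
i.i.d. Bernoulli, each `true` with probability `p`. -/
noncomputable def prob (n : ℕ) (p : ℝ) (S : Set (Fin (2 ^ n) → Bool)) : ℝ :=
  ∑ a : Fin (2 ^ n) → Bool, S.indicator (fun a => ∏ i, if a i then p else 1 - p) a

/-- A game `a` of depth `n` is `d`-fragile if there is a game `a'` at Hamming distance at most
`d` from `a` whose value differs from that of `a`. -/
def Fragile (n d : ℕ) (a : Fin (2 ^ n) → Bool) : Prop :=
  ∃ a' : Fin (2 ^ n) → Bool, hammingDist a a' ≤ d ∧ gameValue n a' ≠ gameValue n a

/-- `F_n(d,p)`: the probability that a depth-`n` random game with parameter `p` is `d`-fragile. -/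
noncomputable def fragProb (n d : ℕ) (p : ℝ) : ℝ := prob n p {a | Fragile n d a}

/-- `α_n(d)`: conditional probability that a golden game of depth `n` is not `d`-fragile,
given that Player 1 wins it. -/
noncomputable def alpha (n d : ℕ) : ℝ :=
  prob n phi {a | ¬ Fragile n d a ∧ gameValue n a = true} /
    prob n phi {a | gameValue n a = true}

/-- `β_n(d)`: conditional probability that a golden game of depth `n` is not `d`-fragile,
given that Player 2 wins it. -/
noncomputable def beta (n d : ℕ) : ℝ :=
  prob n phi {a | ¬ Fragile n d a ∧ gameValue n a = false} /
    prob n phi {a | gameValue n a = false}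

/-!
A single flip changes exactly one of the two subtrees of the root, so a game is 1-fragile iff one
of its subtrees is 1-fragile and flipping that subtree's value flips the root. Hence at an AND
node a win is robust iff both (won) subtrees are robust, while at an OR node a win is robust iff
both subtrees are won, or exactly one is won and that one is robust. The subtrees are independent,
so the probability `N` of a robust win satisfies `N' = N²` at odd and `N' = W² + 2N(1 - W)` at
even heights, where the win probability `W` is `φ` at even and `φ²` at odd heights because
`φ² = 1 - φ`. Dividing by `W` gives the recursion for `α`.
-/

open Finset

lemma two_pow_succ_eq_add (n : ℕ) : 2 ^ (n + 1) = 2 ^ n + 2 ^ n := by rw [pow_succ]; omega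

def finHalvesEquiv (n : ℕ) : Fin (2 ^ n) ⊕ Fin (2 ^ n) ≃ Fin (2 ^ (n + 1)) :=
  finSumFinEquiv.trans (finCongr (two_pow_succ_eq_add n).symm)

def halvesEquiv (n : ℕ) :
    (Fin (2 ^ (n + 1)) → Bool) ≃ (Fin (2 ^ n) → Bool) × (Fin (2 ^ n) → Bool) :=
  ((finHalvesEquiv n).arrowCongr (Equiv.refl Bool)).symm.trans (Equiv.sumArrowEquivProdArrow _ _ _)

/- The two halves are written exactly as in `gameValue`, so that its recursion holds by `rfl`. -/
def leftHalf (n : ℕ) (a : Fin (2 ^ (n + 1)) → Bool) : Fin (2 ^ n) → Bool :=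
  fun i => a ⟨i, by have := i.2; have := two_pow_succ_eq_add n; omega⟩

def rightHalf (n : ℕ) (a : Fin (2 ^ (n + 1)) → Bool) : Fin (2 ^ n) → Bool :=
  fun i => a ⟨i + 2 ^ n, by have := i.2; have := two_pow_succ_eq_add n; omega⟩

section Halves

variable {n : ℕ}

lemma leftHalf_apply (a : Fin (2 ^ (n + 1)) → Bool) (i : Fin (2 ^ n)) :
    leftHalf n a i = a (finHalvesEquiv n (.inl i)) := rfl

lemma rightHalf_apply (a : Fin (2 ^ (n + 1)) → Bool) (i : Fin (2 ^ n)) :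
    rightHalf n a i = a (finHalvesEquiv n (.inr i)) := by
  simp only [rightHalf, finHalvesEquiv, Equiv.trans_apply, finSumFinEquiv_apply_right,
    finCongr_apply]
  congr 1
  ext
  simp

lemma halvesEquiv_apply (a : Fin (2 ^ (n + 1)) → Bool) :
    halvesEquiv n a = (leftHalf n a, rightHalf n a) := by
  ext i <;> simp [halvesEquiv, leftHalf_apply, rightHalf_apply]

lemma leftHalf_halvesEquiv_symm (x y : Fin (2 ^ n) → Bool) :
    leftHalf n ((halvesEquiv n).symm (x, y)) = x :=
  congrArg Prod.fst ((halvesEquiv_apply _).symm.trans ((halvesEquiv n).apply_symm_apply (x, y)))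

lemma rightHalf_halvesEquiv_symm (x y : Fin (2 ^ n) → Bool) :
    rightHalf n ((halvesEquiv n).symm (x, y)) = y :=
  congrArg Prod.snd ((halvesEquiv_apply _).symm.trans ((halvesEquiv n).apply_symm_apply (x, y)))

@[to_additive]
lemma prod_halves {M : Type*} [CommMonoid M] (f : Fin (2 ^ (n + 1)) → M) :
    ∏ i, f i = (∏ i, f (finHalvesEquiv n (.inl i))) * ∏ i, f (finHalvesEquiv n (.inr i)) := by
  rw [← (finHalvesEquiv n).prod_comp, Fintype.prod_sum_type]

lemma hammingDist_halves (a a' : Fin (2 ^ (n + 1)) → Bool) :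
    hammingDist a a' = hammingDist (leftHalf n a) (leftHalf n a') +
      hammingDist (rightHalf n a) (rightHalf n a') := by
  simp only [hammingDist, card_filter, rightHalf_apply]
  exact sum_halves _

end Halves

def weight (n : ℕ) (p : ℝ) (a : Fin (2 ^ n) → Bool) : ℝ := ∏ i, if a i then p else 1 - p

section Probability

variable {n : ℕ} {p : ℝ}

lemma weight_succ (a : Fin (2 ^ (n + 1)) → Bool) :
    weight (n + 1) p a = weight n p (leftHalf n a) * weight n p (rightHalf n a) := by
  simp only [weight, rightHalf_apply]
  exact prod_halves _

lemma prob_eq_sum_indicator_weight (S : Set (Fin (2 ^ n) → Bool)) :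
    prob n p S = ∑ a, S.indicator (weight n p) a := rfl

lemma prob_halves (P Q : Set (Fin (2 ^ n) → Bool)) :
    prob (n + 1) p {a | leftHalf n a ∈ P ∧ rightHalf n a ∈ Q} = prob n p P * prob n p Q := by
  classical
  rw [prob_eq_sum_indicator_weight, ← (halvesEquiv n).symm.sum_comp, Fintype.sum_prod_type,
    prob_eq_sum_indicator_weight, prob_eq_sum_indicator_weight, sum_mul_sum]
  refine sum_congr rfl fun x _ => sum_congr rfl fun y _ => ?_
  simp only [Set.indicator_apply, Set.mem_ofPred_eq, leftHalf_halvesEquiv_symm,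
    rightHalf_halvesEquiv_symm, weight_succ, ite_and, ite_zero_mul_ite_zero]

lemma prob_union {S T : Set (Fin (2 ^ n) → Bool)} (h : Disjoint S T) :
    prob n p (S ∪ T) = prob n p S + prob n p T := by
  simp only [prob_eq_sum_indicator_weight, Set.indicator_union_of_disjoint h, sum_add_distrib]

lemma prob_empty : prob n p ∅ = 0 := by
  simp [prob]

lemma prob_univ : prob n p Set.univ = 1 := by
  simp only [prob, Set.indicator_univ]
  rw [← Fintype.prod_sum (fun (_ : Fin (2 ^ n)) (b : Bool) => if b = true then p else 1 - p)]
  simp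

lemma prob_compl (S : Set (Fin (2 ^ n) → Bool)) : prob n p Sᶜ = 1 - prob n p S := by
  rw [← prob_univ (n := n) (p := p), ← Set.union_compl_self S, prob_union disjoint_compl_right]
  ring

lemma prob_zero_apply_zero : prob 0 p {a | a 0 = true} = p := by
  have : Unique (Fin (2 ^ 0)) := inferInstanceAs (Unique (Fin 1))
  rw [prob, ← (Equiv.funUnique (Fin (2 ^ 0)) Bool).symm.sum_comp, Fintype.sum_bool]
  simp [Set.indicator_apply]

end Probability

def wins (n : ℕ) : Set (Fin (2 ^ n) → Bool) := {a | gameValue n a = true}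

section Wins

variable {n : ℕ} {p : ℝ}

lemma gameValue_succ_of_odd (h : (n + 1) % 2 = 1) (a : Fin (2 ^ (n + 1)) → Bool) :
    gameValue (n + 1) a = (gameValue n (leftHalf n a) && gameValue n (rightHalf n a)) :=
  if_pos h

lemma gameValue_succ_of_even (h : (n + 1) % 2 = 0) (a : Fin (2 ^ (n + 1)) → Bool) :
    gameValue (n + 1) a = (gameValue n (leftHalf n a) || gameValue n (rightHalf n a)) :=
  if_neg (by omega)

lemma prob_wins_succ_of_odd (h : (n + 1) % 2 = 1) :
    prob (n + 1) p (wins (n + 1)) = prob n p (wins n) ^ 2 := by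
  have hset : wins (n + 1) = {a | leftHalf n a ∈ wins n ∧ rightHalf n a ∈ wins n} := by
    ext a
    simp [wins, gameValue_succ_of_odd h]
  rw [hset, prob_halves, sq]

lemma prob_wins_succ_of_even (h : (n + 1) % 2 = 0) :
    1 - prob (n + 1) p (wins (n + 1)) = (1 - prob n p (wins n)) ^ 2 := by
  have hset :
      (wins (n + 1))ᶜ = {a | leftHalf n a ∈ (wins n)ᶜ ∧ rightHalf n a ∈ (wins n)ᶜ} := by
    ext a
    simp [wins, gameValue_succ_of_even h]
  rw [← prob_compl, hset, prob_halves, prob_compl, sq]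

lemma phi_sq : phi ^ 2 = 1 - phi := by
  have h := Real.sq_sqrt (show (0 : ℝ) ≤ 5 by norm_num)
  unfold phi
  nlinarith

lemma phi_pos : 0 < phi := by
  have : 1 < Real.sqrt 5 := by
    rw [show (1 : ℝ) = Real.sqrt 1 by simp]
    exact Real.sqrt_lt_sqrt (by norm_num) (by norm_num)
  unfold phi
  linarith

lemma one_sub_phi_sq : 1 - phi ^ 2 = phi := by
  linarith [phi_sq]

lemma prob_wins_golden (n : ℕ) : prob n phi (wins n) = if n % 2 = 0 then phi else phi ^ 2 := by
  induction n with
  | zero => exact prob_zero_apply_zero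
  | succ n ih =>
    rcases Nat.mod_two_eq_zero_or_one (n + 1) with h | h
    · have := prob_wins_succ_of_even (p := phi) h
      rw [ih, if_neg (by omega), one_sub_phi_sq, phi_sq] at this
      rw [if_pos h]
      exact sub_right_injective this
    · rw [if_neg (by omega), prob_wins_succ_of_odd h, ih, if_pos (by omega)]

end Wins

section Fragility

variable {n : ℕ}

lemma fragile_zero {d : ℕ} (hd : 1 ≤ d) (a : Fin (2 ^ 0) → Bool) : Fragile 0 d a :=
  ⟨fun _ => !a 0, hammingDist_le_card_fintype.trans hd, Bool.not_ne_self (a 0)⟩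

lemma hammingDist_le_one_halves {a a' : Fin (2 ^ (n + 1)) → Bool} (h : hammingDist a a' ≤ 1) :
    (leftHalf n a' = leftHalf n a ∧ hammingDist (rightHalf n a) (rightHalf n a') ≤ 1) ∨
      (rightHalf n a' = rightHalf n a ∧ hammingDist (leftHalf n a) (leftHalf n a') ≤ 1) := by
  rw [hammingDist_halves] at h
  rcases Nat.eq_zero_or_pos (hammingDist (leftHalf n a) (leftHalf n a')) with hl | hl
  · exact .inl ⟨(hammingDist_eq_zero.mp hl).symm, by omega⟩
  · exact .inr ⟨(hammingDist_eq_zero.mp (by omega)).symm, by omega⟩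

lemma fragile_one_succ_iff {f : Bool → Bool → Bool}
    (hf : ∀ a, gameValue (n + 1) a = f (gameValue n (leftHalf n a)) (gameValue n (rightHalf n a)))
    (a : Fin (2 ^ (n + 1)) → Bool) :
    Fragile (n + 1) 1 a ↔
      (Fragile n 1 (leftHalf n a) ∧
          f (!gameValue n (leftHalf n a)) (gameValue n (rightHalf n a)) ≠
            gameValue (n + 1) a) ∨
        (Fragile n 1 (rightHalf n a) ∧
          f (gameValue n (leftHalf n a)) (!gameValue n (rightHalf n a)) ≠
            gameValue (n + 1) a) := by
  constructor
  · rintro ⟨a', hd, hne⟩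
    rw [hf a'] at hne
    rcases hammingDist_le_one_halves hd with ⟨hl, hr⟩ | ⟨hr, hl⟩
    · rw [hl] at hne
      have hrv : gameValue n (rightHalf n a') ≠ gameValue n (rightHalf n a) :=
        fun h => hne (by rw [h, hf])
      exact .inr ⟨⟨_, hr, hrv⟩, by rwa [← Bool.eq_not.mpr hrv]⟩
    · rw [hr] at hne
      have hlv : gameValue n (leftHalf n a') ≠ gameValue n (leftHalf n a) :=
        fun h => hne (by rw [h, hf])
      exact .inl ⟨⟨_, hl, hlv⟩, by rwa [← Bool.eq_not.mpr hlv]⟩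
  · rintro (⟨⟨x', hd, hne⟩, hflip⟩ | ⟨⟨y', hd, hne⟩, hflip⟩)
    · refine ⟨(halvesEquiv n).symm (x', rightHalf n a), ?_, ?_⟩
      · rwa [hammingDist_halves, leftHalf_halvesEquiv_symm, rightHalf_halvesEquiv_symm,
          hammingDist_self, add_zero]
      · rwa [hf, leftHalf_halvesEquiv_symm, rightHalf_halvesEquiv_symm, Bool.eq_not.mpr hne]
    · refine ⟨(halvesEquiv n).symm (leftHalf n a, y'), ?_, ?_⟩
      · rwa [hammingDist_halves, leftHalf_halvesEquiv_symm, rightHalf_halvesEquiv_symm,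
          hammingDist_self, zero_add]
      · rwa [hf, leftHalf_halvesEquiv_symm, rightHalf_halvesEquiv_symm, Bool.eq_not.mpr hne]

end Fragility

def nonFragileWins (n : ℕ) : Set (Fin (2 ^ n) → Bool) :=
  {a | ¬ Fragile n 1 a ∧ gameValue n a = true}

section NonFragileWins

variable {n : ℕ} {p : ℝ}

lemma nonFragileWins_zero : nonFragileWins 0 = ∅ :=
  Set.eq_empty_of_forall_notMem fun a h => h.1 (fragile_zero le_rfl a)

lemma nonFragileWins_succ_of_odd (h : (n + 1) % 2 = 1) :
    nonFragileWins (n + 1) =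
      {a | leftHalf n a ∈ nonFragileWins n ∧ rightHalf n a ∈ nonFragileWins n} := by
  ext a
  simp only [nonFragileWins, Set.mem_ofPred_eq, fragile_one_succ_iff (gameValue_succ_of_odd h),
    gameValue_succ_of_odd h]
  cases gameValue n (leftHalf n a) <;> cases gameValue n (rightHalf n a) <;> simp

lemma nonFragileWins_succ_of_even (h : (n + 1) % 2 = 0) :
    nonFragileWins (n + 1) =
      {a | leftHalf n a ∈ wins n ∧ rightHalf n a ∈ wins n} ∪
        ({a | leftHalf n a ∈ nonFragileWins n ∧ rightHalf n a ∈ (wins n)ᶜ} ∪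
          {a | leftHalf n a ∈ (wins n)ᶜ ∧ rightHalf n a ∈ nonFragileWins n}) := by
  ext a
  simp only [nonFragileWins, wins, Set.mem_union, Set.mem_compl_iff, Set.mem_ofPred_eq,
    fragile_one_succ_iff (gameValue_succ_of_even h), gameValue_succ_of_even h]
  cases gameValue n (leftHalf n a) <;> cases gameValue n (rightHalf n a) <;> simp

lemma prob_nonFragileWins_succ_of_odd (h : (n + 1) % 2 = 1) :
    prob (n + 1) p (nonFragileWins (n + 1)) = prob n p (nonFragileWins n) ^ 2 := by
  rw [nonFragileWins_succ_of_odd h, prob_halves, sq]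

lemma prob_nonFragileWins_succ_of_even (h : (n + 1) % 2 = 0) :
    prob (n + 1) p (nonFragileWins (n + 1)) =
      prob n p (wins n) ^ 2 + 2 * prob n p (nonFragileWins n) * (1 - prob n p (wins n)) := by
  have hsub : nonFragileWins n ⊆ wins n := fun _ h => h.2
  rw [nonFragileWins_succ_of_even h, prob_union, prob_union, prob_halves, prob_halves, prob_halves,
    prob_compl]
  · ring
  · exact Set.disjoint_left.mpr fun a ha hb => hb.1 (hsub ha.1)
  · exact Set.disjoint_union_right.mpr ⟨Set.disjoint_left.mpr fun a ha hb => hb.2 ha.2,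
      Set.disjoint_left.mpr fun a ha hb => hb.1 ha.1⟩

end NonFragileWins

lemma alpha_one_eq (n : ℕ) :
    alpha n 1 = prob n phi (nonFragileWins n) / prob n phi (wins n) := rfl

lemma alpha_one_two_mul_add_one (k : ℕ) : alpha (2 * k + 1) 1 = alpha (2 * k) 1 ^ 2 := by
  have hodd : (2 * k + 1) % 2 = 1 := by omega
  simp only [alpha_one_eq, prob_nonFragileWins_succ_of_odd hodd, prob_wins_golden, hodd,
    Nat.mul_mod_right, one_ne_zero, ↓reduceIte, div_pow]

lemma alpha_one_two_mul_add_two (k : ℕ) :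
    alpha (2 * k + 2) 1 = phi ^ 3 + 2 * phi ^ 2 * alpha (2 * k + 1) 1 := by
  have hodd : (2 * k + 1) % 2 = 1 := by omega
  have heven : (2 * k + 2) % 2 = 0 := by omega
  simp only [alpha_one_eq, prob_nonFragileWins_succ_of_even heven, prob_wins_golden, hodd, heven,
    one_ne_zero, ↓reduceIte, one_sub_phi_sq]
  have := phi_pos.ne'
  field_simp

/-- `α_0(1) = 0` and, for every `n ≥ 1`, `α_{2n}(1) = φ³ + 2φ²·α_{2n−1}(1)` and
`α_{2n−1}(1) = (α_{2n−2}(1))²`. -/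
theorem alpha_one_fragility_recursion :
    alpha 0 1 = 0 ∧
      ∀ n : ℕ, 1 ≤ n →
        alpha (2 * n) 1 = phi ^ 3 + 2 * phi ^ 2 * alpha (2 * n - 1) 1 ∧
        alpha (2 * n - 1) 1 = (alpha (2 * n - 2) 1) ^ 2 := by
  refine ⟨by rw [alpha_one_eq, nonFragileWins_zero, prob_empty, zero_div], fun n hn => ?_⟩
  obtain ⟨k, rfl⟩ : ∃ k, n = k + 1 := ⟨n - 1, by omega⟩
  rw [show 2 * (k + 1) - 1 = 2 * k + 1 by omega, show 2 * (k + 1) - 2 = 2 * k by omega]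
  exact ⟨alpha_one_two_mul_add_two k, alpha_one_two_mul_add_one k⟩
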